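/- arXiv:1809.08050 — 5 statements merged into one kernel-verified Lean document; each statement's English description precedes it below -/
import Mathlib

section
/- For every n ≥ 3, the number of orbits of words in {0,1}^n under the cyclic shift, given by p_n = (1/n) · Σ_{d|n} φ(d) · 2^{n/d}, is even. -/
/-!
Write `S_x(n) = ∑_{d ∣ n} φ(d) x^{n/d}` (`necklaceSum x n`), so that `p_n = S_2(n) / n`; we
show `2n ∣ S_2(n)`. If `n = p^k m` with `p ∤ m`, multiplicativity of `φ` gives
`S_x(n) = ∑_{v ∣ m} φ(v) S_{x^{m/v}}(p^k)`, and the recursion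
`S_y(p^{k+1}) = p S_y(p^k) + y^{p^{k+1}} - y^{p^k}` together with Fermat's little theorem
gives `p^k ∣ S_y(p^k)`; hence `n ∣ S_x(n)`.

For the extra factor `2` take `p = 2` and `n = 2^a m`. Once `2^{k+2} ∣ y^{2^k}`, the same
recursion propagates `2^{k+1} ∣ S_y(2^k)` to `k + 1`; this gives `2^{a+1} ∣ S_y(2^a)` for
`4 ∣ y`, which covers the terms `v < m`, and for `y = 2, a ≥ 2`. The term `v = m` is
`φ(m) S_2(2^a)`, where `φ(m)` is even unless `m = 1`, and then `a ≥ 2` as `n ≥ 3`.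
-/

open Finset
open scoped Pointwise

theorem Nat.Coprime.sum_divisors_mul_eq_sum_sum {M : Type*} [AddCommMonoid M] {m n : ℕ}
    (h : m.Coprime n) (f : ℕ → M) :
    ∑ d ∈ (m * n).divisors, f d = ∑ i ∈ m.divisors, ∑ j ∈ n.divisors, f (i * j) := by
  rw [Nat.divisors_mul, Finset.mul_def, sum_image h.mul_injOn_divisors, sum_product]

def necklaceSum (x n : ℕ) : ℕ := ∑ d ∈ n.divisors, Nat.totient d * x ^ (n / d)

theorem necklaceSum_mul {a b : ℕ} (h : a.Coprime b) (x : ℕ) :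
    necklaceSum x (a * b) = ∑ v ∈ b.divisors, Nat.totient v * necklaceSum (x ^ (b / v)) a := by
  rw [necklaceSum, h.sum_divisors_mul_eq_sum_sum, sum_comm]
  refine sum_congr rfl fun v hv => ?_
  rw [necklaceSum, mul_sum]
  refine sum_congr rfl fun u hu => ?_
  have hu := Nat.dvd_of_mem_divisors hu
  have hv := Nat.dvd_of_mem_divisors hv
  rw [Nat.totient_mul ((h.coprime_dvd_left hu).coprime_dvd_right hv),
    ← Nat.div_mul_div_comm hu hv, pow_mul']
  ring

theorem necklaceSum_prime_pow {p : ℕ} (hp : p.Prime) (y k : ℕ) :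
    necklaceSum y (p ^ k) = ∑ i ∈ range (k + 1), Nat.totient (p ^ i) * y ^ p ^ (k - i) := by
  rw [necklaceSum, Nat.sum_divisors_prime_pow hp]
  refine sum_congr rfl fun i hi => ?_
  rw [Nat.pow_div (Nat.lt_succ_iff.mp (mem_range.mp hi)) hp.pos]

theorem necklaceSum_prime_pow_succ_add {p : ℕ} (hp : p.Prime) (y k : ℕ) :
    necklaceSum y (p ^ (k + 1)) + y ^ p ^ k = p * necklaceSum y (p ^ k) + y ^ p ^ (k + 1) := by
  rw [necklaceSum_prime_pow hp, necklaceSum_prime_pow hp, sum_range_succ', sum_range_succ',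
    mul_sum, sum_range_succ' _ k]
  simp only [Nat.totient_prime_pow_succ hp, Nat.add_sub_add_right, pow_zero, Nat.totient_one,
    Nat.sub_zero]
  obtain ⟨q, rfl⟩ : ∃ q, p = q + 1 := ⟨p - 1, (Nat.sub_add_cancel hp.one_le).symm⟩
  simp only [Nat.add_sub_cancel]
  ring_nf

theorem prime_pow_dvd_necklaceSum_prime_pow {p : ℕ} (hp : p.Prime) (y : ℕ) :
    ∀ k, p ^ k ∣ necklaceSum y (p ^ k)
  | 0 => one_dvd _
  | k + 1 => by
    have hfermat : (p : ℤ) ^ (k + 1) ∣ (y : ℤ) ^ p ^ (k + 1) - (y : ℤ) ^ p ^ k := by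
      have := dvd_sub_pow_of_dvd_sub (Int.ModEq.pow_prime_eq_self hp y).symm.dvd k
      rwa [← pow_mul, ← pow_succ'] at this
    have hrec : (necklaceSum y (p ^ (k + 1)) : ℤ)
        = p * necklaceSum y (p ^ k) + ((y : ℤ) ^ p ^ (k + 1) - (y : ℤ) ^ p ^ k) := by
      have := congrArg (Nat.cast : ℕ → ℤ) (necklaceSum_prime_pow_succ_add hp y k)
      push_cast at this
      linear_combination this
    have hprev : (p : ℤ) ^ k ∣ necklaceSum y (p ^ k) := by
      exact_mod_cast prime_pow_dvd_necklaceSum_prime_pow hp y k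
    have : (p : ℤ) ^ (k + 1) ∣ necklaceSum y (p ^ (k + 1)) := by
      rw [hrec]
      exact dvd_add (pow_succ' (p : ℤ) k ▸ mul_dvd_mul_left _ hprev) hfermat
    exact_mod_cast this

theorem ordProj_dvd_necklaceSum {p n : ℕ} (hp : p.Prime) (hn : n ≠ 0) (x : ℕ) :
    p ^ n.factorization p ∣ necklaceSum x n := by
  have h := necklaceSum_mul ((Nat.coprime_ordCompl hp hn).pow_left (n.factorization p)) x
  rw [Nat.ordProj_mul_ordCompl_eq_self] at h
  rw [h]
  exact dvd_sum fun v _ => dvd_mul_of_dvd_right (prime_pow_dvd_necklaceSum_prime_pow hp _ _) _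

theorem dvd_necklaceSum (x n : ℕ) : n ∣ necklaceSum x n := by
  rcases eq_or_ne n 0 with rfl | hn
  · simp [necklaceSum]
  rw [Nat.dvd_iff_prime_pow_dvd_dvd]
  intro p k hp hpk
  exact (pow_dvd_pow p ((hp.pow_dvd_iff_le_factorization hn).mp hpk)).trans
    (ordProj_dvd_necklaceSum hp hn x)

theorem two_pow_dvd_necklaceSum_two_pow_succ {y k : ℕ}
    (hS : 2 ^ (k + 1) ∣ necklaceSum y (2 ^ k)) (hy : 2 ^ (k + 2) ∣ y ^ 2 ^ k) :
    2 ^ (k + 2) ∣ necklaceSum y (2 ^ (k + 1)) := by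
  have hy' : 2 ^ (k + 2) ∣ y ^ 2 ^ (k + 1) :=
    hy.trans (pow_dvd_pow y (Nat.pow_le_pow_right two_pos k.le_succ))
  refine (Nat.dvd_add_left hy).mp ?_
  rw [necklaceSum_prime_pow_succ_add Nat.prime_two]
  exact dvd_add (pow_succ' 2 (k + 1) ▸ mul_dvd_mul_left 2 hS) hy'

theorem two_pow_succ_dvd_necklaceSum_two_pow_of_four_dvd {y : ℕ} (hy : 4 ∣ y) :
    ∀ k, 2 ^ (k + 1) ∣ necklaceSum y (2 ^ k)
  | 0 => by simpa [necklaceSum] using (dvd_trans ⟨2, rfl⟩ hy)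
  | k + 1 => by
    refine two_pow_dvd_necklaceSum_two_pow_succ
      (two_pow_succ_dvd_necklaceSum_two_pow_of_four_dvd hy k) ?_
    calc 2 ^ (k + 2) ∣ 2 ^ 2 ^ (k + 1) := pow_dvd_pow 2 (Nat.lt_two_pow_self (n := k + 1))
      _ = 4 ^ 2 ^ k := by rw [pow_succ, mul_comm, pow_mul]; norm_num
      _ ∣ y ^ 2 ^ k := pow_dvd_pow_of_dvd hy _

theorem two_pow_succ_dvd_necklaceSum_two_two_pow {k : ℕ} (hk : 2 ≤ k) :
    2 ^ (k + 1) ∣ necklaceSum 2 (2 ^ k) := by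
  induction k, hk using Nat.le_induction with
  | base => decide
  | succ k hk ih =>
    refine two_pow_dvd_necklaceSum_two_pow_succ ih (pow_dvd_pow 2 ?_)
    obtain ⟨j, rfl⟩ : ∃ j, k = j + 2 := ⟨k - 2, by omega⟩
    have := Nat.lt_two_pow_self (n := j)
    rw [pow_add]
    omega

theorem two_le_div_of_mem_properDivisors {v m : ℕ} (hv : v ∈ m.properDivisors) :
    2 ≤ m / v := by
  obtain ⟨⟨w, rfl⟩, hlt⟩ := Nat.mem_properDivisors.mp hv
  have hv0 : 0 < v := Nat.pos_of_mem_properDivisors hv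
  rw [Nat.mul_div_cancel_left w hv0]
  exact (lt_mul_iff_one_lt_right hv0).mp hlt

theorem two_pow_succ_dvd_totient_mul_necklaceSum_two_two_pow {a m : ℕ} (hm : ¬ 2 ∣ m)
    (h : 3 ≤ 2 ^ a * m) : 2 ^ (a + 1) ∣ Nat.totient m * necklaceSum 2 (2 ^ a) := by
  rcases eq_or_ne m 1 with rfl | hm1
  · have ha : 2 ≤ a := by
      by_contra! ha
      interval_cases a <;> simp at h
    rw [Nat.totient_one, one_mul]
    exact two_pow_succ_dvd_necklaceSum_two_two_pow ha
  · have hm0 : m ≠ 0 := by rintro rfl; simp at h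
    rw [pow_succ']
    exact mul_dvd_mul (Nat.totient_even (by omega)).two_dvd
      (prime_pow_dvd_necklaceSum_prime_pow Nat.prime_two 2 a)

theorem two_pow_succ_dvd_necklaceSum_two {n : ℕ} (hn : 3 ≤ n) :
    2 ^ (n.factorization 2 + 1) ∣ necklaceSum 2 n := by
  have hn0 : n ≠ 0 := by omega
  have hm0 : ordCompl[2] n ≠ 0 := (Nat.ordCompl_pos 2 hn0).ne'
  have h := necklaceSum_mul
    ((Nat.coprime_ordCompl Nat.prime_two hn0).pow_left (n.factorization 2)) 2
  rw [Nat.ordProj_mul_ordCompl_eq_self] at h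
  rw [h, ← Nat.cons_self_properDivisors hm0, sum_cons, Nat.div_self (Nat.pos_of_ne_zero hm0),
    pow_one]
  refine dvd_add ?_ (dvd_sum fun v hv => dvd_mul_of_dvd_right ?_ _)
  · exact two_pow_succ_dvd_totient_mul_necklaceSum_two_two_pow
      (Nat.not_dvd_ordCompl Nat.prime_two hn0)
      (hn.trans_eq (Nat.ordProj_mul_ordCompl_eq_self n 2).symm)
  · exact two_pow_succ_dvd_necklaceSum_two_pow_of_four_dvd
      (pow_dvd_pow 2 (two_le_div_of_mem_properDivisors hv)) _

theorem two_mul_dvd_necklaceSum_two {n : ℕ} (hn : 3 ≤ n) : 2 * n ∣ necklaceSum 2 n := by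
  have hn0 : n ≠ 0 := by omega
  have h2n : 2 * n = 2 ^ (n.factorization 2 + 1) * ordCompl[2] n := by
    rw [pow_succ', mul_assoc, Nat.ordProj_mul_ordCompl_eq_self]
  rw [h2n]
  exact ((Nat.coprime_ordCompl Nat.prime_two hn0).pow_left _).mul_dvd_of_dvd_of_dvd
    (two_pow_succ_dvd_necklaceSum_two hn) ((Nat.ordCompl_dvd n 2).trans (dvd_necklaceSum 2 n))

/-- For every `n ≥ 3`, the number of necklaces
`p_n = (1/n) ∑_{d ∣ n} φ(d) 2^{n/d}` of binary words of length `n` is even. -/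
theorem stmt0 (n : ℕ) (hn : 3 ≤ n) :
    2 ∣ (∑ d ∈ n.divisors, Nat.totient d * 2 ^ (n / d)) / n :=
  Nat.dvd_div_of_mul_dvd (mul_comm 2 n ▸ two_mul_dvd_necklaceSum_two hn)
end

section
/- The set of local permutations of X = {0,1}^ℤ forms a group under composition, and this group is locally finite. -/
/-!
A local permutation `f` is continuous on the compact space `X`, so each of the finitely many
coordinates it moves depends on only finitely many coordinates of the input. Hence `f` is a
block map: for some finite window `D` it fixes every coordinate outside `D`, and its coordinates
in `D` depend only on the input in `D`. Finitely many local permutations share a window, the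
block maps with a given finite window form a group, and that group is finite because such a map
is determined by a map `{0,1}^D → {0,1}^D`.
-/

noncomputable section

/-- The full binary shift space `{0,1}^ℤ`. -/
abbrev X : Type := ℤ → ZMod 2

instance : Group (X ≃ₜ X) where
  mul f g := g.trans f
  one := Homeomorph.refl X
  inv := Homeomorph.symm
  mul_assoc f g h := rfl
  one_mul f := Homeomorph.ext fun _ => rfl
  mul_one f := Homeomorph.ext fun _ => rfl
  inv_mul_cancel f := Homeomorph.ext fun x => f.symm_apply_apply x

/-- The shift `σ^n`, `σ^n(x)_i = x_{i+n}`. -/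
def shiftPow (n : ℤ) : X ≃ₜ X where
  toFun x i := x (i + n)
  invFun x i := x (i - n)
  left_inv x := funext fun i => congrArg x (by ring)
  right_inv x := funext fun i => congrArg x (by ring)
  continuous_toFun := continuous_pi fun i => continuous_apply (i + n)
  continuous_invFun := continuous_pi fun i => continuous_apply (i - n)

/-- The shift `σ`. -/
def shiftHomeo : X ≃ₜ X := shiftPow 1

/-- A local permutation: a self-homeomorphism fixing all coordinates outside a bounded interval. -/
def IsLocalPerm (f : X ≃ₜ X) : Prop :=
  ∃ r : ℤ, ∀ (x : X) (i : ℤ), r ≤ |i| → f x i = x i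

/-- The group `G` generated by the shift and the local permutations. -/
def Ggrp : Subgroup (X ≃ₜ X) :=
  Subgroup.closure ({shiftHomeo} ∪ {f | IsLocalPerm f})

/-- Build a homeomorphism of `X` from an involutive continuous map. -/
def mkInvHomeo (F : X → X) (h : Function.Involutive F) (hc : Continuous F) : X ≃ₜ X :=
  ⟨Function.Involutive.toPerm F h, hc, hc⟩

open Set Function

theorem Continuous.exists_finset_dependsOn {ι : Type*} {α : ι → Type*}
    [∀ i, TopologicalSpace (α i)] [CompactSpace (Π i, α i)] {β : Type*} [TopologicalSpace β]
    [DiscreteTopology β] {g : (Π i, α i) → β} (hg : Continuous g) :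
    ∃ D : Finset ι, DependsOn g D := by
  classical
  have hcylinder : ∀ x, ∃ (I : Finset ι) (u : ∀ i, Set (α i)),
      (∀ i ∈ I, IsOpen (u i) ∧ x i ∈ u i) ∧ (I : Set ι).pi u ⊆ g ⁻¹' {g x} :=
    fun x => isOpen_pi_iff.mp (hg.isOpen_preimage _ (isOpen_discrete _)) x rfl
  choose I u hu hsub using hcylinder
  obtain ⟨T, hT⟩ := isCompact_univ.elim_finite_subcover (fun z => (I z : Set ι).pi (u z))
    (fun z => isOpen_set_pi (I z).finite_toSet fun i hi => (hu z i hi).1)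
    (fun x _ => mem_iUnion.2 ⟨x, fun i hi => (hu x i hi).2⟩)
  refine ⟨T.biUnion I, fun x y hxy => ?_⟩
  obtain ⟨z, hz, hxz⟩ := mem_iUnion₂.1 (hT (mem_univ x))
  have hyz : y ∈ (I z : Set ι).pi (u z) := fun i hi =>
    hxy i (Finset.mem_biUnion.2 ⟨z, hz, hi⟩) ▸ hxz i hi
  exact (hsub z hxz).trans (hsub z hyz).symm

section BlockMap

variable {ι α : Type*}

def IsBlockMap (D : Set ι) (f : (ι → α) → ι → α) : Prop :=
  (∀ x, ∀ i ∉ D, f x i = x i) ∧ ∀ i ∈ D, DependsOn (f · i) D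

theorem isBlockMap_id (D : Set ι) : IsBlockMap D (id : (ι → α) → ι → α) :=
  ⟨fun _ _ _ => rfl, fun i hi _ _ hxy => hxy i hi⟩

namespace IsBlockMap

variable {D : Set ι} {f g : (ι → α) → ι → α}

theorem comp (hf : IsBlockMap D f) (hg : IsBlockMap D g) : IsBlockMap D (f ∘ g) := by
  refine ⟨fun x i hi => (hf.1 (g x) i hi).trans (hg.1 x i hi), fun i hi x y hxy => ?_⟩
  exact hf.2 i hi fun j hj => hg.2 j hj hxy

theorem mono {E : Set ι} (hDE : D ⊆ E) (hf : IsBlockMap D f) : IsBlockMap E f := by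
  refine ⟨fun x i hi => hf.1 x i fun h => hi (hDE h), fun i hi x y hxy => ?_⟩
  by_cases hiD : i ∈ D
  · exact hf.2 i hiD fun j hj => hxy j (hDE hj)
  · simpa only [hf.1 x i hiD, hf.1 y i hiD] using hxy i hi

theorem symm {e : (ι → α) ≃ (ι → α)} (he : IsBlockMap D e) : IsBlockMap D e.symm := by
  classical
  refine ⟨fun x i hi => by simpa using (he.1 (e.symm x) i hi).symm, fun i hi x y hxy => ?_⟩
  -- Splicing `e⁻¹ x` on `D` with `e⁻¹ y` off `D` gives a preimage of `y`.
  have hez : e (D.piecewise (e.symm x) (e.symm y)) = y := by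
    funext j
    by_cases hj : j ∈ D
    · calc e (D.piecewise (e.symm x) (e.symm y)) j = e (e.symm x) j :=
          he.2 j hj fun k hk => piecewise_eq_of_mem _ _ _ hk
        _ = y j := by rw [e.apply_symm_apply, hxy j hj]
    · rw [he.1 _ j hj, piecewise_eq_of_notMem _ _ _ hj, ← he.1 (e.symm y) j hj,
        e.apply_symm_apply]
  show e.symm x i = e.symm y i
  rw [← hez, e.symm_apply_apply, piecewise_eq_of_mem _ _ _ hi]

theorem finite_setOf [Finite α] [Nonempty α] (hD : D.Finite) :
    {f : (ι → α) → ι → α | IsBlockMap D f}.Finite := by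
  classical
  have := hD.to_subtype
  obtain ⟨x₀⟩ : Nonempty (ι → α) := inferInstance
  let extend (s : D → α) : ι → α := fun i => if h : i ∈ D then s ⟨i, h⟩ else x₀ i
  refine Finite.of_finite_image (f := fun f s => D.domRestrict (f (extend s))) (toFinite _) ?_
  intro f hf g hg hfg
  funext x i
  by_cases hi : i ∈ D
  · have hx : ∀ j ∈ D, x j = extend (D.domRestrict x) j := fun j hj => by simp [extend, hj]
    calc f x i = f (extend (D.domRestrict x)) i := hf.2 i hi hx
      _ = g (extend (D.domRestrict x)) i := congrFun (congrFun hfg (D.domRestrict x)) ⟨i, hi⟩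
      _ = g x i := (hg.2 i hi hx).symm
  · rw [hf.1 x i hi, hg.1 x i hi]

end IsBlockMap

end BlockMap

def blockSubgroup (D : Set ℤ) : Subgroup (X ≃ₜ X) where
  carrier := {f | IsBlockMap D f}
  one_mem' := isBlockMap_id D
  mul_mem' hf hg := hf.comp hg
  inv_mem' {f} hf := IsBlockMap.symm (e := f.toEquiv) hf

theorem blockSubgroup_finite {D : Set ℤ} (hD : D.Finite) :
    (blockSubgroup D : Set (X ≃ₜ X)).Finite :=
  (IsBlockMap.finite_setOf hD).preimage (f := DFunLike.coe) DFunLike.coe_injective.injOn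

def localPermSubgroup : Subgroup (X ≃ₜ X) where
  carrier := {f | IsLocalPerm f}
  one_mem' := ⟨0, fun _ _ _ => rfl⟩
  mul_mem' := by
    rintro f g ⟨r, hr⟩ ⟨s, hs⟩
    exact ⟨max r s, fun x i hi =>
      (hr (g x) i (le_of_max_le_left hi)).trans (hs x i (le_of_max_le_right hi))⟩
  inv_mem' := by
    rintro f ⟨r, hr⟩
    exact ⟨r, fun x i hi => by simpa using (hr (f.symm x) i hi).symm⟩

theorem IsLocalPerm.exists_isBlockMap {f : X ≃ₜ X} (hf : IsLocalPerm f) :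
    ∃ D : Set ℤ, D.Finite ∧ IsBlockMap D f := by
  obtain ⟨r, hr⟩ := hf
  set I := Finset.Ioo (-r) r
  have hfix : ∀ x i, i ∉ I → f x i = x i := fun x i hi => hr x i <| by
    rw [Finset.mem_Ioo] at hi
    rw [le_abs]
    omega
  obtain ⟨E, hE⟩ := Continuous.exists_finset_dependsOn
    (g := fun x => I.restrict (f x)) (continuous_pi fun i => (continuous_apply _).comp f.continuous)
  refine ⟨↑(I ∪ E), (I ∪ E).finite_toSet, fun x i hi => hfix x i fun h => hi (by simp [h]),
    fun i hi x y hxy => ?_⟩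
  by_cases hiI : i ∈ I
  · exact congrFun (hE fun j hj => hxy j (by simp [hj])) ⟨i, hiI⟩
  · simpa only [hfix x i hiI, hfix y i hiI] using hxy i hi

/-- The local permutations form a subgroup of the homeomorphism group of `X`,
and this group is locally finite: every finitely generated subgroup of it is finite. -/
theorem stmt4 :
    ∃ H : Subgroup (X ≃ₜ X),
      (H : Set (X ≃ₜ X)) = {f | IsLocalPerm f} ∧
      ∀ S : Finset (X ≃ₜ X), (S : Set (X ≃ₜ X)) ⊆ (H : Set (X ≃ₜ X)) →
        ((Subgroup.closure (S : Set (X ≃ₜ X)) : Subgroup (X ≃ₜ X)) : Set (X ≃ₜ X)).Finite := by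
  refine ⟨localPermSubgroup, rfl, fun S hS => ?_⟩
  choose! D hDfin hD using fun f (hf : f ∈ S) => IsLocalPerm.exists_isBlockMap (hS hf)
  have hle : Subgroup.closure (S : Set (X ≃ₜ X)) ≤ blockSubgroup (⋃ f ∈ S, D f) :=
    (Subgroup.closure_le _).2 fun f hf => (hD f hf).mono (subset_biUnion_of_mem (u := D) hf)
  exact (blockSubgroup_finite (S.finite_toSet.biUnion hDfin)).subset hle
end
end

section
/- Every element of the group G generated by the shift σ and the local permutations of {0,1}^ℤ can be written uniquely as σ^n ∘ f with n ∈ ℤ and f a local permutation. -/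
/-!
Conjugating a local permutation by a power of the shift moves its window but keeps it bounded,
so the local permutations form a subgroup normalised by `σ`. Hence every word in `σ` and local
permutations can be rewritten as `σ^n f`. Uniqueness: `σ^n f = σ^m h` makes `σ^(n-m) = h f⁻¹`
local, but a nonzero shift moves a single `1` placed arbitrarily far out, so `n = m` and `f = h`.
-/

noncomputable section

lemma shiftPow_apply (n : ℤ) (x : X) (i : ℤ) : shiftPow n x i = x (i + n) := rfl

lemma shiftPow_zero : shiftPow 0 = 1 :=
  Homeomorph.ext fun x => funext fun i => congrArg x (add_zero i)

lemma shiftPow_add (m n : ℤ) : shiftPow (m + n) = shiftPow m * shiftPow n :=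
  Homeomorph.ext fun x => funext fun i => congrArg x (add_assoc i m n).symm

lemma shiftPow_neg (n : ℤ) : shiftPow (-n) = (shiftPow n)⁻¹ :=
  eq_inv_of_mul_eq_one_left (by rw [← shiftPow_add, neg_add_cancel, shiftPow_zero])

lemma shiftPow_sub (m n : ℤ) : shiftPow (m - n) = (shiftPow n)⁻¹ * shiftPow m := by
  rw [← shiftPow_neg, ← shiftPow_add, neg_add_eq_sub]

def localPerms : Subgroup (X ≃ₜ X) where
  carrier := {f | IsLocalPerm f}
  one_mem' := ⟨0, fun _ _ _ => rfl⟩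
  mul_mem' := by
    rintro f h ⟨r, hf⟩ ⟨s, hh⟩
    refine ⟨max r s, fun x i hi => ?_⟩
    show f (h x) i = x i
    rw [hf _ i (le_of_max_le_left hi), hh x i (le_of_max_le_right hi)]
  inv_mem' := by
    rintro f ⟨r, hf⟩
    refine ⟨r, fun x i hi => ?_⟩
    simpa using (hf (f⁻¹ x) i hi).symm

lemma shiftPow_conj_mem_localPerms (n : ℤ) {f : X ≃ₜ X} (hf : f ∈ localPerms) :
    shiftPow (-n) * f * shiftPow n ∈ localPerms := by
  obtain ⟨r, hf⟩ := hf
  refine ⟨r + |n|, fun x i hi => ?_⟩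
  have hin : r ≤ |i + -n| := by
    have := abs_sub_abs_le_abs_sub i n
    rw [← sub_eq_add_neg]
    omega
  show f (shiftPow n x) (i + -n) = x i
  rw [hf _ _ hin, shiftPow_apply, neg_add_cancel_right]

lemma eq_zero_of_shiftPow_mem_localPerms {n : ℤ} (h : shiftPow n ∈ localPerms) : n = 0 := by
  obtain ⟨r, hr⟩ := h
  by_contra hn
  -- a single `1` at position `|r| + n` is seen by `σ^n` at `|r|`, outside the window
  have key := hr (Pi.single (|r| + n) 1) |r| ((le_abs_self r).trans_eq (abs_abs r).symm)
  rw [shiftPow_apply, Pi.single_eq_same, Pi.single_eq_of_ne (by omega)] at key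
  exact one_ne_zero key

lemma exists_shiftPow_mul_of_mem_Ggrp {g : X ≃ₜ X} (hg : g ∈ Ggrp) :
    ∃ n : ℤ, ∃ f ∈ localPerms, g = shiftPow n * f := by
  induction hg using Subgroup.closure_induction with
  | mem a ha =>
    rcases ha with rfl | ha
    · exact ⟨1, 1, localPerms.one_mem, (mul_one _).symm⟩
    · exact ⟨0, a, ha, by rw [shiftPow_zero, one_mul]⟩
  | one => exact ⟨0, 1, localPerms.one_mem, by rw [shiftPow_zero, one_mul]⟩
  | mul a b _ _ ha hb =>
    obtain ⟨n, f, hf, rfl⟩ := ha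
    obtain ⟨m, h, hh, rfl⟩ := hb
    refine ⟨n + m, shiftPow (-m) * f * shiftPow m * h,
      localPerms.mul_mem (shiftPow_conj_mem_localPerms m hf) hh, ?_⟩
    rw [shiftPow_add, shiftPow_neg]
    group
  | inv a _ ha =>
    obtain ⟨n, f, hf, rfl⟩ := ha
    refine ⟨-n, shiftPow n * f⁻¹ * shiftPow (-n), ?_, ?_⟩
    · simpa using shiftPow_conj_mem_localPerms (-n) (localPerms.inv_mem hf)
    · rw [shiftPow_neg]
      group

lemma eq_of_shiftPow_mul_eq {m n : ℤ} {f h : X ≃ₜ X} (hf : f ∈ localPerms) (hh : h ∈ localPerms)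
    (e : shiftPow n * f = shiftPow m * h) : m = n ∧ h = f := by
  have hshift : shiftPow (n - m) = h * f⁻¹ := by
    rw [shiftPow_sub, inv_mul_eq_iff_eq_mul, ← mul_assoc, ← e, mul_inv_cancel_right]
  have hnm := eq_zero_of_shiftPow_mem_localPerms
    (hshift ▸ localPerms.mul_mem hh (localPerms.inv_mem hf))
  obtain rfl : m = n := by omega
  exact ⟨rfl, (mul_left_cancel e).symm⟩

/-- Every element of `G` can be written uniquely as `σ^n ∘ f` with `f` a local permutation. -/
theorem stmt6 (g : X ≃ₜ X) (hg : g ∈ Ggrp) :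
    ∃! nf : ℤ × (X ≃ₜ X), IsLocalPerm nf.2 ∧ g = nf.2.trans (shiftPow nf.1) := by
  obtain ⟨n, f, hf, rfl⟩ := exists_shiftPow_mul_of_mem_Ggrp hg
  refine ⟨(n, f), ⟨hf, rfl⟩, ?_⟩
  rintro ⟨m, h⟩ ⟨hh, e⟩
  obtain ⟨rfl, rfl⟩ := eq_of_shiftPow_mul_eq hf hh e
  rfl
end
end

section
/- If a local permutation f of {0,1}^ℤ is right-moving (each f(x)_i depends only on x|_{(-∞,i]}), then its inverse f⁻¹ is also right-moving. -/
noncomputable section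

/-- A local permutation is right-moving if each output coordinate depends only on the input
coordinates to its left (inclusive). -/
def RightMoving (f : X ≃ₜ X) : Prop :=
  ∃ g : (i : ℤ) → ({j : ℤ // j ≤ i} → ZMod 2) → ZMod 2,
    ∀ (x : X) (i : ℤ), f x i = g i fun j => x (j : ℤ)


/-- The inverse of a right-moving local permutation is right-moving. -/
theorem stmt13 (f : X ≃ₜ X) (hf : IsLocalPerm f) (hrm : RightMoving f) :
    RightMoving f.symm := by
  obtain ⟨r, hr⟩ := hf
  obtain ⟨g, hg⟩ := hrm
  -- `f x i` depends only on `x|_{≤ i}`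
  have hdep : ∀ (x y : X) (i : ℤ), (∀ j, j ≤ i → x j = y j) → f x i = f y i := by
    intro x y i h
    rw [hg, hg]
    congr 1
    funext j
    exact h j j.2
  -- local perm property for the inverse
  have hsr : ∀ (x : X) (i : ℤ), r ≤ |i| → f.symm x i = x i := by
    intro x i h
    have := hr (f.symm x) i h
    rw [f.apply_symm_apply] at this
    exact this.symm
  -- core claim: `f.symm x i` depends only on `x|_{≤ i}`
  have core : ∀ (i : ℤ) (x y : X), (∀ j, j ≤ i → x j = y j) →
      f.symm x i = f.symm y i := by
    intro i x y hxy
    by_cases hi : r ≤ |i|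
    · rw [hsr x i hi, hsr y i hi]; exact hxy i le_rfl
    push_neg at hi
    obtain ⟨hi1, hi2⟩ := abs_lt.mp hi
    set u := f.symm x with hu'
    set v := f.symm y with hv'
    have hu : f u = x := f.apply_symm_apply x
    have hv : f v = y := f.apply_symm_apply y
    set W : Finset ℤ := Finset.Ioo (-r) r with hW
    set Wi : Finset ℤ := Finset.Ioc (-r) i with hWi
    have hsub : ∀ j, j ∈ Wi → j ∈ W := by
      intro j hj
      rw [hWi, Finset.mem_Ioc] at hj
      exact Finset.mem_Ioo.mpr ⟨hj.1, lt_of_le_of_lt hj.2 hi2⟩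
    have habs : ∀ j : ℤ, j ∉ W → r ≤ |j| := by
      intro j hj
      rw [hW, Finset.mem_Ioo] at hj
      push_neg at hj
      rcases le_or_gt j (-r) with h | h
      · rw [abs_of_nonpos (le_trans h (by linarith))]; linarith
      · have := hj h
        rwa [abs_of_nonneg (by linarith)]
    -- merge a finite window pattern into a background configuration
    set merge : X → (↥W → ZMod 2) → X := fun t a j =>
      if h : j ∈ W then a ⟨j, h⟩ else t j with hmerge
    have hmdep : ∀ (t t' : X) (a b : ↥W → ZMod 2) (j : ℤ), j < r →
        (∀ k : ↥W, (k : ℤ) ≤ j → a k = b k) → (∀ k : ℤ, k ≤ -r → t k = t' k) →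
        f (merge t a) j = f (merge t' b) j := by
      intro t t' a b j hj hab htt
      apply hdep
      intro k hk
      by_cases hkW : k ∈ W
      · simp only [hmerge, dif_pos hkW]
        exact hab ⟨k, hkW⟩ hk
      · simp only [hmerge, dif_neg hkW]
        apply htt
        by_contra hc
        push_neg at hc
        exact hkW (Finset.mem_Ioo.mpr ⟨hc, lt_of_le_of_lt hk hj⟩)
    set Φ : (↥W → ZMod 2) → (↥W → ZMod 2) := fun a j => f (merge u a) (j : ℤ) with hΦ
    have hΦinj : Function.Injective Φ := by
      intro a b hab
      have hfm : f (merge u a) = f (merge u b) := by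
        funext j
        by_cases hj : j ∈ W
        · exact congrFun hab ⟨j, hj⟩
        · rw [hr _ j (habs j hj), hr _ j (habs j hj)]
          simp only [hmerge, dif_neg hj]
      have hm : merge u a = merge u b := f.injective hfm
      funext k
      have := congrFun hm (k : ℤ)
      simpa only [hmerge, dif_pos k.2] using this
    have hΦsurj : Function.Surjective Φ := Finite.injective_iff_surjective.mp hΦinj
    -- extend a pattern on `Wi` to `W` by zero
    set exta : (↥Wi → ZMod 2) → (↥W → ZMod 2) := fun a j =>
      if h : (j : ℤ) ∈ Wi then a ⟨(j : ℤ), h⟩ else 0 with hexta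
    set α : (↥Wi → ZMod 2) → (↥Wi → ZMod 2) := fun a j =>
      Φ (exta a) ⟨(j : ℤ), hsub _ j.2⟩ with hα
    -- `Φ c j` for `j ≤ i` only depends on `c` at coordinates `≤ i`
    have hΦdep : ∀ (c d : ↥W → ZMod 2) (j : ℤ) (hj : j ∈ W), j ≤ i →
        (∀ k : ↥W, (k : ℤ) ≤ i → c k = d k) → Φ c ⟨j, hj⟩ = Φ d ⟨j, hj⟩ := by
      intro c d j hj hji hcd
      exact hmdep u u c d j (Finset.mem_Ioo.mp hj).2
        (fun k hk => hcd k (le_trans hk hji)) (fun _ _ => rfl)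
    have hαsurj : Function.Surjective α := by
      intro c
      obtain ⟨b, hb⟩ := hΦsurj (fun j => if h : (j : ℤ) ∈ Wi then c ⟨(j : ℤ), h⟩ else 0)
      refine ⟨fun j => b ⟨(j : ℤ), hsub _ j.2⟩, ?_⟩
      funext j
      have hji : (j : ℤ) ≤ i := (Finset.mem_Ioc.mp j.2).2
      have h1 : α (fun k => b ⟨(k : ℤ), hsub _ k.2⟩) j
          = Φ b ⟨(j : ℤ), hsub _ j.2⟩ := by
        apply hΦdep _ _ _ _ hji
        intro k hk
        have hkWi : (k : ℤ) ∈ Wi :=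
          Finset.mem_Ioc.mpr ⟨(Finset.mem_Ioo.mp k.2).1, hk⟩
        simp only [hexta, dif_pos hkWi]
      rw [h1, hb]
      simp only [dif_pos j.2]
    have hαinj : Function.Injective α := Finite.injective_iff_surjective.mpr hαsurj
    -- Φ applied to the window of u gives x, similarly for v
    have key : ∀ (w z : X), f w = z → (∀ k : ℤ, k ≤ -r → w k = u k) →
        α (fun k => w (k : ℤ)) = fun k : ↥Wi => z (k : ℤ) := by
      intro w z hwz hwu
      funext j
      have hji : (j : ℤ) ≤ i := (Finset.mem_Ioc.mp j.2).2
      have hjW : (j : ℤ) ∈ W := hsub _ j.2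
      have h1 : α (fun k => w (k : ℤ)) j
          = f (merge w (fun k : ↥W => w (k : ℤ))) (j : ℤ) := by
        show f (merge u (exta fun k => w (k : ℤ))) (j : ℤ)
          = f (merge w (fun k : ↥W => w (k : ℤ))) (j : ℤ)
        refine hmdep u w (exta fun k => w (k : ℤ)) (fun k : ↥W => w (k : ℤ)) ((j : ℤ)) (Finset.mem_Ioo.mp hjW).2 ?_ ?_
        · intro k hk
          have hkWi : (k : ℤ) ∈ Wi :=
            Finset.mem_Ioc.mpr ⟨(Finset.mem_Ioo.mp k.2).1, le_trans hk hji⟩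
          simp only [hexta, dif_pos hkWi]
        · intro k hk
          exact (hwu k hk).symm
      have h2 : merge w (fun k : ↥W => w (k : ℤ)) = w := by
        funext k
        by_cases hk : k ∈ W
        · simp only [hmerge, dif_pos hk]
        · simp only [hmerge, dif_neg hk]
      rw [h1, h2, hwz]
    have hux : α (fun k => u (k : ℤ)) = fun k : ↥Wi => x (k : ℤ) :=
      key u x hu (fun _ _ => rfl)
    have hvy : α (fun k => v (k : ℤ)) = fun k : ↥Wi => y (k : ℤ) := by
      apply key v y hv
      intro k hk
      have hk' : r ≤ |k| := by
        rw [abs_of_nonpos (le_trans hk (by linarith))]; linarith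
      rw [hv', hu', hsr y k hk', hsr x k hk']
      exact (hxy k (le_trans hk (le_of_lt hi1))).symm
    have hxyW : (fun k : ↥Wi => x (k : ℤ)) = fun k : ↥Wi => y (k : ℤ) := by
      funext k
      exact hxy k (Finset.mem_Ioc.mp k.2).2
    have huv : (fun k : ↥Wi => u (k : ℤ)) = fun k : ↥Wi => v (k : ℤ) := by
      apply hαinj
      rw [hux, hvy, hxyW]
    have hiWi : i ∈ Wi := Finset.mem_Ioc.mpr ⟨hi1, le_rfl⟩
    exact congrFun huv ⟨i, hiWi⟩
  -- assemble the right-moving structure for f.symm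
  refine ⟨fun i z => f.symm (fun j => if h : j ≤ i then z ⟨j, h⟩ else 0) i, ?_⟩
  intro x i
  apply core
  intro j hj
  simp only [dif_pos hj]
end
end

section
/- If f is a right-moving local permutation with rule functions g_i (so f(x)_i = g_i(x|_{(-∞,i]})), then for every i, every y ∈ {0,1}^{(-∞,i-1]} and a ≠ b in {0,1}, g_i(y·a) ≠ g_i(y·b). -/
noncomputable section

/-! If `g i (y·a) = g i (y·b)`, then `g i (y·c)` does not depend on the letter `c`. Take `n` so
large that `f` fixes every coordinate beyond `i + n`, and let `u` range over the `2 ^ (n + 1)`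
blocks on `[i, i + n]` placed after `y` and followed by zeros. The image under `f` of such a
configuration is then determined by its `n` coordinates on `(i, i + n]`, contradicting the
injectivity of `f`. -/

/-- The word `y·c` of the statement. -/
def wordSnoc {i : ℤ} (y : {j : ℤ // j < i} → ZMod 2) (c : ZMod 2) : {j : ℤ // j ≤ i} → ZMod 2 :=
  fun j => if h : (j : ℤ) < i then y ⟨j, h⟩ else c

def fillBlock (i : ℤ) (n : ℕ) (y : {j : ℤ // j < i} → ZMod 2) (u : Fin (n + 1) → ZMod 2) : X :=
  fun j => if h : j < i then y ⟨j, h⟩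
    else if h' : j ≤ i + n then u ⟨(j - i).toNat, by omega⟩ else 0

theorem ZMod.two_eq_or_eq_of_ne {a b : ZMod 2} (hab : a ≠ b) (c : ZMod 2) : c = a ∨ c = b := by
  revert a b c
  decide

section fillBlock

variable {i : ℤ} {n : ℕ} {y : {j : ℤ // j < i} → ZMod 2} {u : Fin (n + 1) → ZMod 2}

theorem fillBlock_of_lt {j : ℤ} (hj : j < i) : fillBlock i n y u j = y ⟨j, hj⟩ :=
  dif_pos hj

theorem fillBlock_add (k : Fin (n + 1)) : fillBlock i n y u (i + k) = u k := by
  have hk := k.isLt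
  rw [fillBlock, dif_neg (by omega), dif_pos (by omega)]
  exact congrArg u (Fin.ext (by simp))

theorem fillBlock_of_gt {j : ℤ} (hj : i + n < j) : fillBlock i n y u j = 0 := by
  rw [fillBlock, dif_neg (by omega), dif_neg (by omega)]

theorem fillBlock_restrict_Iic :
    (fun j : {j : ℤ // j ≤ i} => fillBlock i n y u j) = wordSnoc y (u 0) := by
  funext ⟨j, hj⟩
  rcases hj.lt_or_eq with hj | rfl
  · simp only [wordSnoc, fillBlock_of_lt hj, dif_pos hj]
  · simpa [wordSnoc] using fillBlock_add (y := y) (u := u) 0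

theorem fillBlock_injective : Function.Injective (fillBlock i n y) := fun u v huv =>
  funext fun k => by simpa only [fillBlock_add] using congrFun huv (i + k)

end fillBlock

section rightMoving

variable {f : X ≃ₜ X} {r : ℤ} {g : (i : ℤ) → ({j : ℤ // j ≤ i} → ZMod 2) → ZMod 2}

theorem apply_eq_of_eqOn_Iic (hg : ∀ (x : X) (i : ℤ), f x i = g i fun j => x (j : ℤ))
    {x x' : X} {j : ℤ} (h : ∀ k ≤ j, x k = x' k) : f x j = f x' j := by
  rw [hg, hg]
  exact congrArg (g j) (funext fun k => h k k.2)

theorem injective_window_fillBlock (hr : ∀ (x : X) (j : ℤ), r ≤ |j| → f x j = x j)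
    (hg : ∀ (x : X) (i : ℤ), f x i = g i fun j => x (j : ℤ))
    {i : ℤ} {n : ℕ} {y : {j : ℤ // j < i} → ZMod 2}
    (hconst : ∀ c c', g i (wordSnoc y c) = g i (wordSnoc y c')) (hn : r ≤ i + n) :
    Function.Injective fun u : Fin (n + 1) → ZMod 2 =>
      fun k : Fin n => f (fillBlock i n y u) (i + 1 + k) := by
  intro u v huv
  refine fillBlock_injective (y := y) (f.injective (funext fun j => ?_))
  rcases lt_trichotomy j i with hj | rfl | hj
  · exact apply_eq_of_eqOn_Iic hg fun k hk => by
      rw [fillBlock_of_lt (hk.trans_lt hj), fillBlock_of_lt (hk.trans_lt hj)]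
  · rw [hg, hg, fillBlock_restrict_Iic, fillBlock_restrict_Iic, hconst]
  · by_cases hjn : j ≤ i + n
    · have hk := congrFun huv ⟨(j - i - 1).toNat, by omega⟩
      dsimp only at hk
      rwa [show i + 1 + ((j - i - 1).toNat : ℤ) = j by omega] at hk
    · have hrj : r ≤ |j| := le_trans (by omega) (le_abs_self j)
      rw [hr _ j hrj, hr _ j hrj, fillBlock_of_gt (by omega), fillBlock_of_gt (by omega)]

end rightMoving

/-- If `f` is a right-moving local permutation with rule functions `g_i`, then each `g_i`
distinguishes the last letter: extending a left-infinite word `y` by distinct letters gives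
distinct values. -/
theorem stmt14 (f : X ≃ₜ X) (hf : IsLocalPerm f)
    (g : (i : ℤ) → ({j : ℤ // j ≤ i} → ZMod 2) → ZMod 2)
    (hg : ∀ (x : X) (i : ℤ), f x i = g i fun j => x (j : ℤ))
    (i : ℤ) (y : {j : ℤ // j < i} → ZMod 2) (a b : ZMod 2) (hab : a ≠ b) :
    g i (fun j => if h : (j : ℤ) < i then y ⟨j, h⟩ else a) ≠
      g i (fun j => if h : (j : ℤ) < i then y ⟨j, h⟩ else b) := by
  intro hcon
  obtain ⟨r, hr⟩ := hf
  have hconst : ∀ c, g i (wordSnoc y c) = g i (wordSnoc y a) := fun c =>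
    (ZMod.two_eq_or_eq_of_ne hab c).elim (fun h => h ▸ rfl) (fun h => h ▸ hcon.symm)
  set n := (r - i).toNat
  have hcard := Fintype.card_le_of_injective _
    (injective_window_fillBlock hr hg (fun c c' => (hconst c).trans (hconst c').symm)
      (n := n) (by omega))
  simp only [Fintype.card_fun, Fintype.card_fin, ZMod.card] at hcard
  exact absurd hcard (Nat.pow_lt_pow_right one_lt_two n.lt_succ_self).not_ge
end
end
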